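/- arXiv:2102.07585 — 2 statements merged into one kernel-verified Lean document; each statement's English description precedes it below -/
import Mathlib

section
/- Let G be a finite connected multigraph with first Betti number β, and let P be an exhaustive k-partition of G, i.e., a cut graph G_P of G whose connected components are exactly k clusters covering all edges, where G_P is the cut of minimal rank realizing these clusters. Then k - 1 ≤ rank(G_P : G) ≤ k - 1 + β. -/
open Relation

section CountingLemmas

variable {X : Type*}

/-- Chains in `e ∪ {(a,b)}` either stay in `e` or pass through `{a,b}`. -/
lemma eqvgen_pair_cases (e : X → X → Prop) (a b : X) {x y : X}
    (h : EqvGen (fun u v => e u v ∨ (u = a ∧ v = b)) x y) :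
    EqvGen e x y ∨ ((EqvGen e x a ∨ EqvGen e x b) ∧ (EqvGen e y a ∨ EqvGen e y b)) := by
  induction h with
  | rel u v huv =>
      rcases huv with h | ⟨rfl, rfl⟩
      · exact Or.inl (EqvGen.rel _ _ h)
      · exact Or.inr ⟨Or.inl (EqvGen.refl _), Or.inr (EqvGen.refl _)⟩
  | refl u => exact Or.inl (EqvGen.refl _)
  | symm u v _ ih =>
      rcases ih with h | ⟨h1, h2⟩
      · exact Or.inl (EqvGen.symm _ _ h)
      · exact Or.inr ⟨h2, h1⟩
  | trans u v w _ _ ih1 ih2 =>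
      rcases ih1 with h1 | ⟨ha1, hb1⟩
      · rcases ih2 with h2 | ⟨ha2, hb2⟩
        · exact Or.inl (EqvGen.trans _ _ _ h1 h2)
        · refine Or.inr ⟨?_, hb2⟩
          rcases ha2 with h | h
          · exact Or.inl (EqvGen.trans _ _ _ h1 h)
          · exact Or.inr (EqvGen.trans _ _ _ h1 h)
      · rcases ih2 with h2 | ⟨ha2, hb2⟩
        · refine Or.inr ⟨ha1, ?_⟩
          rcases hb1 with h | h
          · exact Or.inl (EqvGen.trans _ _ _ (EqvGen.symm _ _ h2) h)
          · exact Or.inr (EqvGen.trans _ _ _ (EqvGen.symm _ _ h2) h)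
        · exact Or.inr ⟨ha1, hb2⟩

lemma quot_mk_eqvgen_eq_iff (e : X → X → Prop) {x y : X} :
    Quot.mk (EqvGen e) x = Quot.mk (EqvGen e) y ↔ EqvGen e x y :=
  Quot.eq.trans (Relation.EqvGen.is_equivalence e).eqvGen_iff

/-- Adding a single pair to a relation decreases the number of classes by at most one. -/
lemma card_quot_le_pair [Finite X] (e : X → X → Prop) (a b : X) :
    Nat.card (Quot (EqvGen e)) ≤
      Nat.card (Quot (EqvGen (fun u v => e u v ∨ (u = a ∧ v = b)))) + 1 := by
  classical
  set e' : X → X → Prop := fun u v => e u v ∨ (u = a ∧ v = b) with he'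
  have hf : ∀ x y : X, EqvGen e x y →
      (Quot.mk (EqvGen e') x = Quot.mk (EqvGen e') y) := by
    intro x y h
    exact Quot.sound (h.mono (fun u v h => Or.inl h))
  let f : Quot (EqvGen e) → Quot (EqvGen e') := Quot.lift (Quot.mk _) hf
  let g : Quot (EqvGen e) → Option (Quot (EqvGen e')) :=
    fun q => if q = Quot.mk _ a then none else some (f q)
  have hg : Function.Injective g := by
    intro q q' h
    induction q using Quot.ind with | _ x => ?_
    induction q' using Quot.ind with | _ y => ?_
    by_cases h1 : Quot.mk (EqvGen e) x = Quot.mk (EqvGen e) a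
    · by_cases h2 : Quot.mk (EqvGen e) y = Quot.mk (EqvGen e) a
      · exact h1.trans h2.symm
      · simp only [g, if_pos h1, if_neg h2] at h
        exact absurd h (by simp)
    · by_cases h2 : Quot.mk (EqvGen e) y = Quot.mk (EqvGen e) a
      · simp only [g, if_neg h1, if_pos h2] at h
        exact absurd h (by simp)
      · simp only [g, if_neg h1, if_neg h2, Option.some.injEq] at h
        have hxy : EqvGen e' x y := (quot_mk_eqvgen_eq_iff e').mp h
        rcases eqvgen_pair_cases e a b hxy with hxy' | ⟨hx, hy⟩
        · exact (quot_mk_eqvgen_eq_iff e).mpr hxy'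
        · have hxa : ¬ EqvGen e x a := fun hc => h1 ((quot_mk_eqvgen_eq_iff e).mpr hc)
          have hya : ¬ EqvGen e y a := fun hc => h2 ((quot_mk_eqvgen_eq_iff e).mpr hc)
          have hxb : EqvGen e x b := hx.resolve_left hxa
          have hyb : EqvGen e y b := hy.resolve_left hya
          exact (quot_mk_eqvgen_eq_iff e).mpr (hxb.trans _ _ _ (hyb.symm _ _))
  haveI hfin : Fintype (Quot (EqvGen e')) := Fintype.ofFinite _
  calc Nat.card (Quot (EqvGen e)) ≤ Nat.card (Option (Quot (EqvGen e'))) :=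
        Nat.card_le_card_of_injective g hg
    _ = Nat.card (Quot (EqvGen e')) + 1 := Finite.card_option

lemma eqvgen_eq_of_bot {r : X → X → Prop} (hr : ∀ x y, ¬ r x y) {x y : X}
    (h : EqvGen r x y) : x = y := by
  induction h with
  | rel u v huv => exact absurd huv (hr u v)
  | refl u => rfl
  | symm u v _ ih => exact ih.symm
  | trans u v w _ _ ih1 ih2 => exact ih1.trans ih2

/-- Master counting lemma: in a graph with vertex type `W` and edges indexed by `ι`,
`#vertices ≤ #components + #edges`. -/
lemma card_le_card_quot_add {W ι : Type*} [Finite W] [Fintype ι] (u v : ι → W) :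
    Nat.card W ≤
      Nat.card (Quot (EqvGen (fun x y => ∃ i, u i = x ∧ v i = y))) + Fintype.card ι := by
  classical
  have key : ∀ s : Finset ι, Nat.card W ≤
      Nat.card (Quot (EqvGen (fun x y => ∃ i ∈ s, u i = x ∧ v i = y))) + s.card := by
    intro s
    induction s using Finset.induction_on with
    | empty =>
        have hinj : Function.Injective
            (Quot.mk (EqvGen (fun x y => ∃ i ∈ (∅ : Finset ι), u i = x ∧ v i = y))) := by
          intro x y h
          refine eqvgen_eq_of_bot ?_ ((quot_mk_eqvgen_eq_iff _).mp h)
          rintro x y ⟨i, hi, -⟩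
          exact absurd hi (Finset.notMem_empty i)
        simpa using Nat.card_le_card_of_injective _ hinj
    | @insert j s hj ih =>
        have hrel : (fun x y => ∃ i ∈ insert j s, u i = x ∧ v i = y) =
            (fun x y => (∃ i ∈ s, u i = x ∧ v i = y) ∨ (x = u j ∧ y = v j)) := by
          funext x y
          apply propext
          constructor
          · rintro ⟨i, hi, h1, h2⟩
            rcases Finset.mem_insert.mp hi with rfl | hi'
            · exact Or.inr ⟨h1.symm, h2.symm⟩
            · exact Or.inl ⟨i, hi', h1, h2⟩
          · rintro (⟨i, hi, h1, h2⟩ | ⟨rfl, rfl⟩)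
            · exact ⟨i, Finset.mem_insert_of_mem hi, h1, h2⟩
            · exact ⟨j, Finset.mem_insert_self j s, rfl, rfl⟩
        calc Nat.card W
            ≤ Nat.card (Quot (EqvGen (fun x y => ∃ i ∈ s, u i = x ∧ v i = y))) + s.card := ih
          _ ≤ (Nat.card (Quot (EqvGen
                (fun x y => (∃ i ∈ s, u i = x ∧ v i = y) ∨ (x = u j ∧ y = v j)))) + 1) + s.card := by
              have := card_quot_le_pair (fun x y => ∃ i ∈ s, u i = x ∧ v i = y) (u j) (v j)
              omega
          _ = Nat.card (Quot (EqvGen (fun x y => ∃ i ∈ insert j s, u i = x ∧ v i = y)))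
                + (insert j s).card := by
              rw [hrel, Finset.card_insert_of_notMem hj]
              omega
  have huniv := key Finset.univ
  have hrel : (fun x y => ∃ i ∈ (Finset.univ : Finset ι), u i = x ∧ v i = y) =
      (fun x y => ∃ i, u i = x ∧ v i = y) := by
    funext x y
    apply propext
    simp
  rw [hrel, Finset.card_univ] at huniv
  exact huniv

end CountingLemmas



/-- A finite multigraph presented by its set of edge-endpoints (darts): `inv` pairs
the two endpoints of each edge; the vertex set is a partition (setoid) of the darts. -/
structure PMultigraph where
  D : Type
  [fintypeD : Fintype D]
  inv : D → D
  inv_invol : ∀ x, inv (inv x) = x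
  inv_ne : ∀ x, inv x ≠ x

attribute [instance] PMultigraph.fintypeD

namespace PMultigraph

variable (G : PMultigraph)

/-- One step of connectivity for the graph with vertex partition `V`:
two darts are adjacent if they lie at the same vertex or are the two ends of one edge. -/
def step (V : Setoid G.D) (x y : G.D) : Prop := V.r x y ∨ y = G.inv x

/-- Reachability in the graph with vertex partition `V`. -/
def reach (V : Setoid G.D) : G.D → G.D → Prop := Relation.ReflTransGen (G.step V)

/-- The graph with vertex partition `V` is connected. -/
def Conn (V : Setoid G.D) : Prop := ∀ x y, G.reach V x y

/-- Number of vertices. -/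
noncomputable def nVert (V : Setoid G.D) : ℕ := Nat.card (Quotient V)

/-- Number of edges. -/
noncomputable def nEdge : ℕ := Fintype.card G.D / 2

/-- First Betti number `|E| - |V| + 1` (as an integer). -/
noncomputable def betti (V : Setoid G.D) : ℤ := (G.nEdge : ℤ) - G.nVert V + 1

/-- Number of connected components of the graph with vertex partition `V`. -/
noncomputable def ncomp (V : Setoid G.D) : ℕ := Nat.card (Quot (G.reach V))

/-- The setoid pairing each dart with its partner. -/
def edgeSetoid : Setoid G.D where
  r x y := y = x ∨ y = G.inv x
  iseqv := by
    refine ⟨fun x => Or.inl rfl, ?_, ?_⟩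
    · rintro x y (rfl | rfl)
      · exact Or.inl rfl
      · exact Or.inr (G.inv_invol x).symm
    · rintro x y z (rfl | rfl) h
      · exact h
      · rcases h with rfl | rfl
        · exact Or.inr rfl
        · rw [G.inv_invol]; exact Or.inl rfl

lemma card_D_eq : Nat.card G.D = 2 * Nat.card (Quotient G.edgeSetoid) := by
  classical
  let f : G.D → Quotient G.edgeSetoid × Bool :=
    fun d => (Quotient.mk G.edgeSetoid d,
      decide (d = (Quotient.mk G.edgeSetoid d).out))
  have hout : ∀ d : G.D, d = (Quotient.mk G.edgeSetoid d).out ∨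
      d = G.inv (Quotient.mk G.edgeSetoid d).out := by
    intro d
    have h0 := Quotient.mk_out (s := G.edgeSetoid) d
    exact h0
  have hinj : Function.Injective f := by
    intro d d' h
    have h1 : (Quotient.mk G.edgeSetoid d) = Quotient.mk G.edgeSetoid d' :=
      congrArg Prod.fst h
    have h2 : decide (d = (Quotient.mk G.edgeSetoid d).out)
        = decide (d' = (Quotient.mk G.edgeSetoid d').out) := congrArg Prod.snd h
    rw [h1] at h2
    have hb := decide_eq_decide.mp h2
    rcases hout d with hd | hd
    · rw [h1] at hd
      exact hd.trans (hb.mp hd).symm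
    · rw [h1] at hd
      rcases hout d' with hd' | hd'
      · exact (hb.mpr hd').trans hd'.symm
      · exact hd.trans hd'.symm
  have hsurj : Function.Surjective f := by
    rintro ⟨c, bb⟩
    cases bb
    · refine ⟨G.inv c.out, ?_⟩
      have hmk : Quotient.mk G.edgeSetoid (G.inv c.out) = c := by
        have : Quotient.mk G.edgeSetoid (G.inv c.out) = Quotient.mk G.edgeSetoid c.out :=
          Quotient.sound (Or.inr (by rw [G.inv_invol]))
        rw [this, Quotient.out_eq]
      simp only [f, hmk, Prod.mk.injEq, true_and]
      rw [decide_eq_false_iff_not]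
      exact fun hc => G.inv_ne c.out hc
    · refine ⟨c.out, ?_⟩
      simp only [f, Quotient.out_eq, Prod.mk.injEq, true_and]
      simp [Quotient.out_eq]
  have := Nat.card_congr (Equiv.ofBijective f ⟨hinj, hsurj⟩)
  rw [this, Nat.card_prod]
  have : Nat.card Bool = 2 := by simp [Nat.card_eq_fintype_card]
  rw [this]; ring

lemma nEdge_eq : G.nEdge = Nat.card (Quotient G.edgeSetoid) := by
  have h := G.card_D_eq
  rw [Nat.card_eq_fintype_card] at h
  unfold nEdge
  omega

lemma step_symm (V' : Setoid G.D) : Symmetric (G.step V') := by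
  rintro x y (h | rfl)
  · exact Or.inl (V'.symm h)
  · exact Or.inr (G.inv_invol x).symm

lemma ncomp_eq (V' : Setoid G.D) :
    G.ncomp V' = Nat.card (Quot (EqvGen (fun x y : Quotient V' =>
      ∃ c : Quotient G.edgeSetoid,
        Quotient.mk V' c.out = x ∧ Quotient.mk V' (G.inv c.out) = y))) := by
  set r := fun x y : Quotient V' => ∃ c : Quotient G.edgeSetoid,
      Quotient.mk V' c.out = x ∧ Quotient.mk V' (G.inv c.out) = y with hrdef
  have hkey : ∀ d o : G.D, d = G.inv o → o = G.inv d := by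
    intro d o ho; rw [ho, G.inv_invol]
  have hmo : ∀ d : G.D, d = (Quotient.mk G.edgeSetoid d).out ∨
      d = G.inv (Quotient.mk G.edgeSetoid d).out := by
    intro d
    have h0 := Quotient.mk_out (s := G.edgeSetoid) d
    exact h0
  have hedge : ∀ d : G.D, EqvGen r (Quotient.mk V' d) (Quotient.mk V' (G.inv d)) := by
    intro d
    have hd : (Quotient.mk G.edgeSetoid d).out = d ∨
        (Quotient.mk G.edgeSetoid d).out = G.inv d := by
      rcases hmo d with h | h
      · exact Or.inl h.symm
      · exact Or.inr (hkey d _ h)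
    rcases hd with h | h
    · exact EqvGen.rel _ _ ⟨Quotient.mk G.edgeSetoid d, by rw [h], by rw [h]⟩
    · exact EqvGen.symm _ _
        (EqvGen.rel _ _ ⟨Quotient.mk G.edgeSetoid d, by rw [h], by rw [h, G.inv_invol]⟩)
  have hwd1 : ∀ x y : G.D, G.reach V' x y →
      Quot.mk (EqvGen r) (Quotient.mk V' x) = Quot.mk (EqvGen r) (Quotient.mk V' y) := by
    intro x y h
    induction h with
    | refl => rfl
    | tail _ hbc ih =>
        refine ih.trans ?_
        rcases hbc with h | rfl
        · rw [Quotient.sound h]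
        · exact Quot.sound (hedge _)
  have hstep : ∀ {x y}, G.step V' x y → G.reach V' x y :=
    fun h => Relation.ReflTransGen.single h
  have hwd2 : ∀ x y : Quotient V', EqvGen r x y →
      Quot.mk (G.reach V') x.out = Quot.mk (G.reach V') y.out := by
    intro x y h
    induction h with
    | rel a b hab =>
        obtain ⟨c, hc1, hc2⟩ := hab
        apply Quot.sound
        have h1 : G.reach V' a.out c.out := by
          refine hstep (Or.inl ?_)
          have : Quotient.mk V' a.out = Quotient.mk V' c.out := by
            rw [Quotient.out_eq, hc1]
          exact Quotient.exact this
        have h2 : G.reach V' c.out (G.inv c.out) := hstep (Or.inr rfl)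
        have h3 : G.reach V' (G.inv c.out) b.out := by
          refine hstep (Or.inl ?_)
          have : Quotient.mk V' (G.inv c.out) = Quotient.mk V' b.out := by
            rw [Quotient.out_eq, hc2]
          exact Quotient.exact this
        exact (h1.trans h2).trans h3
    | refl a => rfl
    | symm a b _ ih => exact ih.symm
    | trans a b c _ _ ih1 ih2 => exact ih1.trans ih2
  refine Nat.card_congr
    ⟨Quot.lift (fun d => Quot.mk (EqvGen r) (Quotient.mk V' d)) hwd1,
     Quot.lift (fun w => Quot.mk (G.reach V') w.out) hwd2, ?_, ?_⟩
  · intro z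
    induction z using Quot.ind with | _ d => ?_
    show Quot.mk (G.reach V') (Quotient.mk V' d).out = Quot.mk (G.reach V') d
    exact Quot.sound (Relation.ReflTransGen.single (Or.inl (Quotient.mk_out d)))
  · intro w
    induction w using Quot.ind with | _ x => ?_
    show Quot.mk (EqvGen r) (Quotient.mk V' x.out) = Quot.mk (EqvGen r) x
    rw [Quotient.out_eq]

end PMultigraph

/-- For an exhaustive `k`-partition (a cut with exactly `k` connected components)
of a connected multigraph with first Betti number `β`, the rank of the cut satisfies
`k - 1 ≤ rank ≤ k - 1 + β`. -/
theorem rank_of_exhaustive_partition (G : PMultigraph) [Nonempty G.D]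
    (V V' : Setoid G.D) (hconn : G.Conn V) (hcut : ∀ x y, V'.r x y → V.r x y)
    (k : ℕ) (hk : 1 ≤ k) (hcomp : G.ncomp V' = k) :
    (k : ℤ) - 1 ≤ (G.nVert V' : ℤ) - G.nVert V ∧
      (G.nVert V' : ℤ) - G.nVert V ≤ (k : ℤ) - 1 + G.betti V := by
  classical
  haveI : Fintype (Quotient G.edgeSetoid) := Fintype.ofFinite _
  haveI : Fintype (Quotient V') := Fintype.ofFinite _
  -- Upper bound: #vertices of the cut graph ≤ #components + #edges
  have hupper : G.nVert V' ≤ k + G.nEdge := by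
    have h : Nat.card (Quotient V') ≤
        Nat.card (Quot (EqvGen (fun x y : Quotient V' =>
          ∃ c : Quotient G.edgeSetoid,
            Quotient.mk V' c.out = x ∧ Quotient.mk V' (G.inv c.out) = y)))
          + Fintype.card (Quotient G.edgeSetoid) :=
      card_le_card_quot_add
        (fun c : Quotient G.edgeSetoid => Quotient.mk V' c.out)
        (fun c : Quotient G.edgeSetoid => Quotient.mk V' (G.inv c.out))
    rw [← G.ncomp_eq V', hcomp] at h
    have he : Fintype.card (Quotient G.edgeSetoid) = G.nEdge := by
      rw [← Nat.card_eq_fintype_card, G.nEdge_eq]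
    rw [he] at h
    exact h
  -- Lower bound: connectivity of the contracted graph
  have hlower : k + G.nVert V ≤ 1 + G.nVert V' := by
    set r2 := fun x y : Quot (G.reach V') ⊕ Quotient V =>
      ∃ a : Quotient V',
        (Sum.inl (Quot.mk (G.reach V') a.out) : Quot (G.reach V') ⊕ Quotient V) = x ∧
        (Sum.inr (Quotient.mk V a.out) : Quot (G.reach V') ⊕ Quotient V) = y with hr2
    have hB : ∀ d : G.D, EqvGen r2
        (Sum.inl (Quot.mk (G.reach V') d)) (Sum.inr (Quotient.mk V d)) := by
      intro d
      have h0 : V'.r (Quotient.mk V' d).out d := Quotient.mk_out d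
      have h1 : Quot.mk (G.reach V') (Quotient.mk V' d).out = Quot.mk (G.reach V') d :=
        Quot.sound (Relation.ReflTransGen.single (Or.inl h0))
      have h2 : Quotient.mk V (Quotient.mk V' d).out = Quotient.mk V d :=
        Quotient.sound (hcut _ _ h0)
      have hrel : r2 (Sum.inl (Quot.mk (G.reach V') (Quotient.mk V' d).out))
          (Sum.inr (Quotient.mk V (Quotient.mk V' d).out)) :=
        ⟨Quotient.mk V' d, rfl, rfl⟩
      have := EqvGen.rel _ _ hrel
      rwa [h1, h2] at this
    have hC : ∀ d d' : G.D, EqvGen r2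
        (Sum.inr (Quotient.mk V d) : Quot (G.reach V') ⊕ Quotient V)
        (Sum.inr (Quotient.mk V d')) := by
      intro d d'
      have h := hconn d d'
      induction h with
      | refl => exact EqvGen.refl _
      | tail _ hbc ih =>
          refine EqvGen.trans _ _ _ ih ?_
          rcases hbc with h | rfl
          · rw [Quotient.sound h]
            exact EqvGen.refl _
          · rename_i b _
            have hsame : Quot.mk (G.reach V') b = Quot.mk (G.reach V') (G.inv b) :=
              Quot.sound (Relation.ReflTransGen.single (Or.inr rfl))
            refine EqvGen.trans _ _ _ (EqvGen.symm _ _ (hB b)) ?_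
            rw [hsame]
            exact hB (G.inv b)
    have hall : ∀ w w' : Quot (G.reach V') ⊕ Quotient V, EqvGen r2 w w' := by
      have hred : ∀ w : Quot (G.reach V') ⊕ Quotient V,
          ∃ d : G.D, EqvGen r2 w (Sum.inr (Quotient.mk V d)) := by
        intro w
        rcases w with t | c
        · obtain ⟨d, rfl⟩ := Quot.exists_rep t
          exact ⟨d, hB d⟩
        · obtain ⟨d, rfl⟩ := Quot.exists_rep c
          exact ⟨d, EqvGen.refl _⟩
      intro w w'
      obtain ⟨d, hd⟩ := hred w
      obtain ⟨d', hd'⟩ := hred w'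
      exact (hd.trans _ _ _ (hC d d')).trans _ _ _ (EqvGen.symm _ _ hd')
    have hone : Nat.card (Quot (EqvGen r2)) = 1 := by
      rw [Nat.card_eq_one_iff_unique]
      refine ⟨⟨fun z z' => ?_⟩, ⟨Quot.mk _ (Sum.inr (Quotient.mk V (Classical.arbitrary G.D)))⟩⟩
      induction z using Quot.ind with | _ w => ?_
      induction z' using Quot.ind with | _ w' => ?_
      exact Quot.sound (hall w w')
    have h : Nat.card (Quot (G.reach V') ⊕ Quotient V) ≤
        Nat.card (Quot (EqvGen r2)) + Fintype.card (Quotient V') :=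
      card_le_card_quot_add
        (fun a : Quotient V' =>
          (Sum.inl (Quot.mk (G.reach V') a.out) : Quot (G.reach V') ⊕ Quotient V))
        (fun a : Quotient V' =>
          (Sum.inr (Quotient.mk V a.out) : Quot (G.reach V') ⊕ Quotient V))
    rw [hone, Nat.card_sum] at h
    have h1 : Nat.card (Quot (G.reach V')) = k := hcomp
    have h2 : Nat.card (Quotient V) = G.nVert V := rfl
    have h3 : Fintype.card (Quotient V') = G.nVert V' := (Nat.card_eq_fintype_card).symm
    rw [h1, h2, h3] at h
    omega
  have hb : G.betti V = (G.nEdge : ℤ) - G.nVert V + 1 := rfl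
  constructor
  · omega
  · rw [hb]; omega
end

section
/- Let G be a finite connected multigraph with first Betti number β and with |V¹| vertices of degree one, and let P be an exhaustive k-partition of G whose minimal cut has rank k - 1 + r with 0 ≤ r ≤ β. Then at most β + |V¹| - r clusters of P can be 'malign', i.e., contain a degree-one vertex of G or a cycle of G. -/
namespace PMultigraph

variable (G : PMultigraph)

/-- The set of darts of a connected component `c` of the cut graph. -/
def compSet (V' : Setoid G.D) (c : Quot (G.reach V')) : Set G.D :=
  {x | Quot.mk (G.reach V') x = c}

/-- A cluster (connected component of the cut graph given by `V'`) is malign if it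
contains a degree-one vertex of the original graph (a singleton `V`-class) or a
cycle of the graph (its number of edges is at least its number of vertices). -/
def Malign (V V' : Setoid G.D) (c : Quot (G.reach V')) : Prop :=
  (∃ x ∈ G.compSet V' c, ∀ y, V.r y x → y = x) ∨
    (G.compSet V' c).ncard / 2 ≥ ((fun x => Quotient.mk V' x) '' G.compSet V' c).ncard

/-- Number of degree-one vertices (singleton classes) of the graph with vertex
partition `V`. -/
noncomputable def nLeaves (V : Setoid G.D) : ℕ :=
  Nat.card {v : Quotient V // ∀ p q : G.D, Quotient.mk V p = v → Quotient.mk V q = v → p = q}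

end PMultigraph


lemma two_mul_ncard_le_of_exists_descending {α β : Type*} {f : α → α}
    (hf : Function.Involutive f) {C : Set α} (hC : C.Finite) (hfC : ∀ x ∈ C, f x ∈ C)
    (p : α → β) (d : β → ℕ) {T : Set β} (hT : ∀ q ∈ T, ∃ z ∈ C, p z = q ∧ d (p (f z)) < d q) :
    2 * T.ncard ≤ C.ncard := by
  have := hC.to_subtype
  choose z hzC hpz hlt using fun q : T => hT q q.2
  let down : T → C := fun q => ⟨z q, hzC q⟩
  let up : T → C := fun q => ⟨f (z q), hfC _ (hzC q)⟩
  have hdown : Function.Injective down := fun q q' h =>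
    Subtype.ext <| by rw [← hpz q, ← hpz q']; exact congrArg (p ∘ Subtype.val) h
  have hup : Function.Injective up := fun q q' h =>
    hdown <| Subtype.ext <| hf.injective <| congrArg Subtype.val h
  have hdisj : ∀ q q', down q ≠ up q' := by
    intro q q' h
    have h' : z q = f (z q') := congrArg Subtype.val h
    have h₁ := hlt q'
    have h₂ := hlt q
    rw [← h', hpz q] at h₁
    rw [h', hf, hpz q'] at h₂
    omega
  have := Finite.of_injective down hdown
  calc 2 * T.ncard = Nat.card (T ⊕ T) := by rw [Nat.card_sum, Nat.card_coe_set_eq]; ring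
    _ ≤ Nat.card C := Nat.card_le_card_of_injective _ (hdown.sumElim hup hdisj)
    _ = C.ncard := Nat.card_coe_set_eq C

lemma sum_ncard_fiber {α β : Type*} [Finite α] [Fintype β] (f : α → β) :
    ∑ b, {a | f a = b}.ncard = Nat.card α := by
  classical
  have := Fintype.ofFinite α
  rw [Nat.card_eq_fintype_card, ← Finset.card_univ,
    Finset.card_eq_sum_card_fiberwise (fun a _ => Finset.mem_univ (f a))]
  simp [Set.ncard_eq_toFinset_card']

lemma card_one_le_le_sum {ι : Type*} [Fintype ι] {f : ι → ℤ} (hf : ∀ i, 0 ≤ f i) :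
    (Nat.card {i // 1 ≤ f i} : ℤ) ≤ ∑ i, f i := by
  classical
  rw [Nat.card_eq_fintype_card, Fintype.card_subtype, ← Finset.sum_boole]
  refine Finset.sum_le_sum fun i _ => ?_
  split_ifs <;> linarith [hf i]

namespace PMultigraph

variable (G : PMultigraph) (V : Setoid G.D)

instance : Std.Symm (G.step V) where
  symm x y := by
    rintro (h | rfl)
    · exact Or.inl (V.symm h)
    · exact Or.inr (G.inv_invol x).symm

lemma reach_equivalence : Equivalence (G.reach V) :=
  ⟨fun _ => .refl, fun h => symm_of (Relation.ReflTransGen (G.step V)) h, .trans⟩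

lemma reach_inv (x : G.D) : G.reach V x (G.inv x) := .single (Or.inr rfl)

lemma reach_of_rel {x y : G.D} (h : V.r x y) : G.reach V x y := .single (Or.inl h)

lemma mem_compSet_of_reach {c : Quot (G.reach V)} {x y : G.D} (hx : x ∈ G.compSet V c)
    (h : G.reach V x y) : y ∈ G.compSet V c :=
  ((G.reach_equivalence V).quot_mk_eq_iff y x |>.2 ((G.reach_equivalence V).symm h)).trans hx

def reachIn : ℕ → G.D → G.D → Prop
  | 0, x, y => y = x
  | n + 1, x, y => ∃ z, reachIn n x z ∧ G.step V z y

lemma reach_iff_exists_reachIn {x y : G.D} : G.reach V x y ↔ ∃ n, G.reachIn V n x y := by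
  constructor
  · intro h
    induction h with
    | refl => exact ⟨0, rfl⟩
    | tail _ hstep ih =>
      obtain ⟨n, hn⟩ := ih
      exact ⟨n + 1, _, hn, hstep⟩
  · rintro ⟨n, hn⟩
    induction n generalizing y with
    | zero => exact hn ▸ .refl
    | succ n ih =>
      obtain ⟨z, hz, hstep⟩ := hn
      exact (ih hz).tail hstep

noncomputable def vertDist (x₀ : G.D) (q : Quotient V) : ℕ :=
  sInf {n | ∃ z, G.reachIn V n x₀ z ∧ Quotient.mk V z = q}

lemma exists_vertDist_inv_lt {x₀ z₀ : G.D} (hz₀ : G.reach V x₀ z₀)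
    (hne : Quotient.mk V z₀ ≠ Quotient.mk V x₀) :
    ∃ z, G.reach V x₀ z ∧ Quotient.mk V z = Quotient.mk V z₀ ∧
      G.vertDist V x₀ (Quotient.mk V (G.inv z)) < G.vertDist V x₀ (Quotient.mk V z₀) := by
  obtain ⟨n, hn⟩ := (G.reach_iff_exists_reachIn V).1 hz₀
  have hmem : G.vertDist V x₀ (Quotient.mk V z₀) ∈
      {n | ∃ z, G.reachIn V n x₀ z ∧ Quotient.mk V z = Quotient.mk V z₀} :=
    Nat.sInf_mem ⟨n, z₀, hn, rfl⟩
  obtain ⟨z, hz, hzq⟩ := hmem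
  cases hd : G.vertDist V x₀ (Quotient.mk V z₀) with
  | zero =>
    rw [hd] at hz
    exact absurd (hz ▸ hzq).symm hne
  | succ m =>
    rw [hd] at hz
    obtain ⟨y, hy, hstep⟩ := hz
    have hdy : G.vertDist V x₀ (Quotient.mk V y) ≤ m := Nat.sInf_le ⟨y, hy, rfl⟩
    rcases hstep with hyz | rfl
    · have : G.vertDist V x₀ (Quotient.mk V z₀) ≤ m :=
        Nat.sInf_le ⟨y, hy, (Quotient.sound hyz).trans hzq⟩
      omega
    · have hy' : G.reach V x₀ y := (G.reach_iff_exists_reachIn V).2 ⟨m, hy⟩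
      refine ⟨G.inv y, hy'.tail (Or.inr rfl), hzq, ?_⟩
      rw [G.inv_invol]
      omega

def compVerts (c : Quot (G.reach V)) : Set (Quotient V) :=
  (fun x => Quotient.mk V x) '' G.compSet V c

lemma two_mul_ncard_compVerts_le (c : Quot (G.reach V)) :
    2 * (G.compVerts V c).ncard ≤ (G.compSet V c).ncard + 2 := by
  obtain ⟨x₀, rfl⟩ := Quot.exists_rep c
  have hx₀ : Quotient.mk V x₀ ∈ G.compVerts V (Quot.mk _ x₀) := ⟨x₀, rfl, rfl⟩
  have hroot := Set.ncard_sdiff_singleton_add_one hx₀ (Set.toFinite _)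
  suffices 2 * (G.compVerts V (Quot.mk _ x₀) \ {Quotient.mk V x₀}).ncard ≤
      (G.compSet V (Quot.mk _ x₀)).ncard by omega
  refine two_mul_ncard_le_of_exists_descending G.inv_invol (Set.toFinite _)
    (fun x hx => G.mem_compSet_of_reach V hx (G.reach_inv V x)) (Quotient.mk V)
    (G.vertDist V x₀) ?_
  rintro q ⟨⟨z₀, hz₀, rfl⟩, hne⟩
  have hreach : G.reach V x₀ z₀ :=
    (G.reach_equivalence V).symm (((G.reach_equivalence V).quot_mk_eq_iff _ _).1 hz₀)
  obtain ⟨z, hz, hzq, hlt⟩ := G.exists_vertDist_inv_lt V hreach hne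
  exact ⟨z, G.mem_compSet_of_reach V rfl hz, hzq, hlt⟩

def clusterOf : Quotient V → Quot (G.reach V) :=
  Quotient.lift (Quot.mk _) fun _ _ h => Quot.sound (G.reach_of_rel V h)

lemma compVerts_eq_fiber (c : Quot (G.reach V)) :
    G.compVerts V c = {q | G.clusterOf V q = c} := by
  ext q
  induction q using Quotient.ind with
  | _ a =>
    constructor
    · rintro ⟨x, hx, hxa⟩
      exact (G.mem_compSet_of_reach V hx (G.reach_of_rel V (Quotient.exact hxa)) :)
    · intro h
      exact ⟨a, h, rfl⟩

noncomputable def clusterBetti (c : Quot (G.reach V)) : ℤ :=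
  ((G.compSet V c).ncard / 2 : ℕ) - (G.compVerts V c).ncard + 1

lemma clusterBetti_nonneg (c : Quot (G.reach V)) : 0 ≤ G.clusterBetti V c := by
  have := G.two_mul_ncard_compVerts_le V c
  unfold clusterBetti
  omega

lemma sum_clusterBetti_le [Fintype (Quot (G.reach V))] :
    ∑ c, G.clusterBetti V c ≤ (G.nEdge : ℤ) - G.nVert V + G.ncomp V := by
  have hedges : ∑ c, (G.compSet V c).ncard / 2 ≤ G.nEdge := by
    rw [nEdge, Nat.le_div_iff_mul_le two_pos, Finset.sum_mul, ← Nat.card_eq_fintype_card,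
      ← sum_ncard_fiber (Quot.mk (G.reach V))]
    exact Finset.sum_le_sum fun c _ => Nat.div_mul_le_self _ 2
  have hverts : ∑ c, (G.compVerts V c).ncard = G.nVert V := by
    simp only [compVerts_eq_fiber]
    exact sum_ncard_fiber _
  have hsum : ∑ c, G.clusterBetti V c =
      ((∑ c, (G.compSet V c).ncard / 2 : ℕ) : ℤ) - G.nVert V + G.ncomp V := by
    simp only [clusterBetti, Finset.sum_add_distrib, Finset.sum_sub_distrib, ← hverts,
      Nat.cast_sum, Finset.sum_const, Finset.card_univ, ncomp, Nat.card_eq_fintype_card,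
      nsmul_eq_mul, mul_one]
  rw [hsum]
  linarith [(Nat.cast_le (α := ℤ)).2 hedges]

def HasLeaf (V' : Setoid G.D) (c : Quot (G.reach V')) : Prop :=
  ∃ x ∈ G.compSet V' c, ∀ y, V.r y x → y = x

lemma card_hasLeaf_le (V' : Setoid G.D) :
    Nat.card {c // G.HasLeaf V V' c} ≤ G.nLeaves V := by
  choose x hxc hleaf using fun c : {c // G.HasLeaf V V' c} => c.2
  refine Nat.card_le_card_of_injective
    (fun c => ⟨Quotient.mk V (x c), fun p q hp hq => ?_⟩) fun c c' h => ?_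
  · rw [hleaf c p (Quotient.exact hp), hleaf c q (Quotient.exact hq)]
  · have hx : x c = x c' := hleaf c' (x c) (Quotient.exact (congrArg Subtype.val h))
    exact Subtype.ext ((hxc c).symm.trans (hx ▸ hxc c'))

lemma hasLeaf_or_one_le_clusterBetti_of_malign (V' : Setoid G.D) {c : Quot (G.reach V')}
    (h : G.Malign V V' c) : G.HasLeaf V V' c ∨ 1 ≤ G.clusterBetti V' c := by
  refine h.imp id fun hcycle => ?_
  change _ ≥ (G.compVerts V' c).ncard at hcycle
  unfold clusterBetti
  omega

lemma card_malign_le (V' : Setoid G.D) :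
    Nat.card {c // G.Malign V V' c} ≤
      Nat.card {c // G.HasLeaf V V' c} + Nat.card {c // 1 ≤ G.clusterBetti V' c} := by
  have hsub : {c | G.Malign V V' c} ⊆ {c | G.HasLeaf V V' c} ∪ {c | 1 ≤ G.clusterBetti V' c} :=
    fun _ => G.hasLeaf_or_one_le_clusterBetti_of_malign V V'
  have h := (Set.ncard_le_ncard hsub).trans (Set.ncard_union_le _ _)
  rwa [← Nat.card_coe_set_eq, ← Nat.card_coe_set_eq, ← Nat.card_coe_set_eq] at h

end PMultigraph

theorem malign_count_le_general (G : PMultigraph)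
    (V V' : Setoid G.D)
    (k r : ℕ) (hcomp : G.ncomp V' = k)
    (hrank : (G.nVert V' : ℤ) = (G.nVert V : ℤ) + ((k : ℤ) - 1 + r)) :
    (Nat.card {c : Quot (G.reach V') // G.Malign V V' c} : ℤ) ≤
      G.betti V + G.nLeaves V - r := by
  have := Fintype.ofFinite (Quot (G.reach V'))
  have hbetti : ∑ c, G.clusterBetti V' c ≤ G.betti V - r := by
    have := G.sum_clusterBetti_le V'
    rw [PMultigraph.betti]
    omega
  calc (Nat.card {c // G.Malign V V' c} : ℤ)
      ≤ Nat.card {c // G.HasLeaf V V' c} + Nat.card {c // 1 ≤ G.clusterBetti V' c} := by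
        exact_mod_cast G.card_malign_le V V'
    _ ≤ G.nLeaves V + ∑ c, G.clusterBetti V' c :=
        add_le_add (by exact_mod_cast G.card_hasLeaf_le V V')
          (card_one_le_le_sum (G.clusterBetti_nonneg V'))
    _ ≤ G.betti V + G.nLeaves V - r := by linarith

/-- An exhaustive `k`-partition of rank `k - 1 + r` (with `0 ≤ r ≤ β`) has at most
`β + |V¹| - r` malign clusters. -/
theorem malign_count_le (G : PMultigraph) [Nonempty G.D]
    (V V' : Setoid G.D) (hconn : G.Conn V) (hcut : ∀ x y, V'.r x y → V.r x y)
    (k r : ℕ) (hk : 1 ≤ k) (hcomp : G.ncomp V' = k)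
    (hrank : (G.nVert V' : ℤ) = (G.nVert V : ℤ) + ((k : ℤ) - 1 + r))
    (hr : (r : ℤ) ≤ G.betti V) :
    (Nat.card {c : Quot (G.reach V') // G.Malign V V' c} : ℤ) ≤
      G.betti V + G.nLeaves V - r :=
  malign_count_le_general G V V' k r hcomp hrank
end
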